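/- Let R be a Euclidean domain with grading δ and refinement δ̂ (an injective map into a well-ordered set with δ̂(0) minimal and δ(a) < δ(b) implying δ̂(a) < δ̂(b)). If I is a submodule of R[x₁,…,x_n]^k and G, H are both reduced strong Gröbner bases of I with respect to the same admissible order, then G = H. -/
import Mathlib


open MvPolynomial

/-- Polynomial vectors: `R[x₁,…,x_n]^k`. -/
abbrev PolyVec (R : Type*) [CommSemiring R] (n k : ℕ) := Fin k → MvPolynomial (Fin n) R

/-- Monomial vectors `x^α e_i`, encoded as pairs `(α, i)`. -/
abbrev MonV (n k : ℕ) := (Fin n →₀ ℕ) × Fin k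

/-- An admissible order on monomial vectors. -/
structure AdmissibleOrder (n k : ℕ) where
  le : MonV n k → MonV n k → Prop
  refl : ∀ a, le a a
  trans : ∀ a b c, le a b → le b c → le a c
  antisymm : ∀ a b, le a b → le b a → a = b
  total : ∀ a b, le a b ∨ le b a
  dvd_le : ∀ (α β : Fin n →₀ ℕ) (i : Fin k), (∀ m, α m ≤ β m) → le (α, i) (β, i)
  add_le : ∀ (α β γ : Fin n →₀ ℕ) (i j : Fin k),
    le (α, i) (β, j) → le (α + γ, i) (β + γ, j)

variable {R : Type*} [CommRing R] {n k : ℕ}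

/-- `m` is the leading monomial vector of `f` w.r.t. the admissible order `r`
(so in particular `f ≠ 0`). -/
def IsDeg (r : AdmissibleOrder n k) (f : PolyVec R n k) (m : MonV n k) : Prop :=
  (f m.2).coeff m.1 ≠ 0 ∧ ∀ m' : MonV n k, (f m'.2).coeff m'.1 ≠ 0 → r.le m' m

/-- The leading term vector of `g` divides the leading term vector of `f`:
same position, componentwise smaller exponent, and the leading coefficient of `g`
divides that of `f` in `R`. -/
def LtDvd (r : AdmissibleOrder n k) (g f : PolyVec R n k) : Prop :=
  ∃ mg mf : MonV n k, IsDeg r g mg ∧ IsDeg r f mf ∧ mg.2 = mf.2 ∧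
    (∀ m, mg.1 m ≤ mf.1 m) ∧ (g mg.2).coeff mg.1 ∣ (f mf.2).coeff mf.1

/-- `G` is a strong Gröbner basis of the submodule `I` w.r.t. `r`. -/
def IsSGB (r : AdmissibleOrder n k) (G : Set (PolyVec R n k))
    (I : Submodule (MvPolynomial (Fin n) R) (PolyVec R n k)) : Prop :=
  (∀ g ∈ G, g ∈ I ∧ g ≠ 0) ∧
  ∀ f ∈ I, f ≠ 0 → ∃ g ∈ G, LtDvd r g f

/-- Multiplication of a polynomial vector by the term `a·x^m`. -/
noncomputable def termSMul (m : Fin n →₀ ℕ) (a : R) (g : PolyVec R n k) : PolyVec R n k :=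
  fun j => MvPolynomial.monomial m a * g j

/-- `f` has a strong standard representation by `G`: `f = Σ aᵢ mᵢ gᵢ` with `gᵢ ∈ G`,
`Lm(m₁g₁) = Lm(f)` and `Lm(mᵢgᵢ) < Lm(f)` for `i ≥ 2`. -/
def IsSSR (r : AdmissibleOrder n k) (G : Set (PolyVec R n k)) (f : PolyVec R n k) : Prop :=
  ∃ (N : ℕ) (hN : 0 < N) (a : Fin N → R) (m : Fin N → (Fin n →₀ ℕ))
    (g : Fin N → PolyVec R n k),
    (∀ i, g i ∈ G) ∧
    f = ∑ i, termSMul (m i) (a i) (g i) ∧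
    ∃ mf m0 : MonV n k, IsDeg r f mf ∧ IsDeg r (g ⟨0, hN⟩) m0 ∧
      ((m ⟨0, hN⟩ + m0.1, m0.2) : MonV n k) = mf ∧
      ∀ i : Fin N, i ≠ ⟨0, hN⟩ → ∃ mi : MonV n k, IsDeg r (g i) mi ∧
        r.le (m i + mi.1, mi.2) mf ∧ ((m i + mi.1, mi.2) : MonV n k) ≠ mf

/-- `h` is an `S`-polynomial vector of the ordered pair `(f, g)` w.r.t. the
Euclidean grading `δ`. -/
def IsSPolyPair {W : Type*} [LinearOrder W] (δ : R → W) (r : AdmissibleOrder n k)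
    (f g h : PolyVec R n k) : Prop :=
  ∃ mf mg : MonV n k, IsDeg r f mf ∧ IsDeg r g mg ∧
    ((mf.2 ≠ mg.2 ∧ h = 0) ∨
     (mf.2 = mg.2 ∧ δ ((g mg.2).coeff mg.1) ≤ δ ((f mf.2).coeff mf.1) ∧
       ∃ q : R,
         δ ((f mf.2).coeff mf.1 - q * (g mg.2).coeff mg.1) < δ ((f mf.2).coeff mf.1) ∧
         h = termSMul ((mf.1 ⊔ mg.1) - mg.1) 1 f - termSMul ((mf.1 ⊔ mg.1) - mf.1) q g))

/-- `h` is an `S`-polynomial vector of the (unordered) set `{f, g}`. -/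
def IsSPolySet {W : Type*} [LinearOrder W] (δ : R → W) (r : AdmissibleOrder n k)
    (f g h : PolyVec R n k) : Prop :=
  IsSPolyPair δ r f g h ∨ IsSPolyPair δ r g f h

section Reduction

variable {R : Type*} [CommRing R] {n k : ℕ} {W' : Type*} [LinearOrder W']

/-- The term `b·x^α e_i` is reducible by `G`: some `g ∈ G` has `Lm(g) ∣ x^α e_i` and
`δ̂(b − q·Lc(g)) < δ̂(b)` for some `q ∈ R`. -/
def TermRed (dh : R → W') (r : AdmissibleOrder n k) (G : Set (PolyVec R n k))
    (b : R) (α : Fin n →₀ ℕ) (i : Fin k) : Prop :=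
  ∃ g ∈ G, ∃ mg : MonV n k, IsDeg r g mg ∧ mg.2 = i ∧ (∀ m, mg.1 m ≤ α m) ∧
    ∃ q : R, dh (b - q * (g mg.2).coeff mg.1) < dh b

/-- `f` is reducible by `G` if one of its terms is reducible by `G`. -/
def Red (dh : R → W') (r : AdmissibleOrder n k) (G : Set (PolyVec R n k))
    (f : PolyVec R n k) : Prop :=
  ∃ (α : Fin n →₀ ℕ) (i : Fin k), (f i).coeff α ≠ 0 ∧ TermRed dh r G ((f i).coeff α) α i

/-- `p` is normalized: `p ≠ 0` and `δ̂(Lc p) ≤ δ̂(u · Lc p)` for every unit `u`. -/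
def Normalized (dh : R → W') (r : AdmissibleOrder n k) (p : PolyVec R n k) : Prop :=
  p ≠ 0 ∧ ∃ mp : MonV n k, IsDeg r p mp ∧
    ∀ u : R, IsUnit u → dh ((p mp.2).coeff mp.1) ≤ dh (u * (p mp.2).coeff mp.1)

/-- `G` is a reduced strong Gröbner basis of `I`. -/
def IsRedSGB (dh : R → W') (r : AdmissibleOrder n k) (G : Set (PolyVec R n k))
    (I : Submodule (MvPolynomial (Fin n) R) (PolyVec R n k)) : Prop :=
  IsSGB r G I ∧ ∀ g ∈ G, Normalized dh r g ∧ ¬ Red dh r (G \ {g}) g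

end Reduction

section Aux

variable {R : Type*} [CommRing R] {n k : ℕ} {W' : Type*} [LinearOrder W']

theorem isDeg_unique' {r : AdmissibleOrder n k} {f : PolyVec R n k} {m1 m2 : MonV n k}
    (h1 : IsDeg r f m1) (h2 : IsDeg r f m2) : m1 = m2 :=
  r.antisymm m1 m2 (h2.2 m1 h1.1) (h1.2 m2 h2.1)

theorem finset_exists_max (r : AdmissibleOrder n k) (s : Finset (MonV n k))
    (hs : s.Nonempty) : ∃ m ∈ s, ∀ m' ∈ s, r.le m' m := by
  classical
  induction s using Finset.induction with
  | empty => exact absurd hs (by simp)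
  | @insert a s ha ih =>
    rcases s.eq_empty_or_nonempty with rfl | hs'
    · refine ⟨a, by simp, ?_⟩
      intro m' hm'
      simp only [Finset.mem_insert, Finset.notMem_empty, or_false] at hm'
      subst hm'; exact r.refl _
    · obtain ⟨m, hm, hmax⟩ := ih hs'
      rcases r.total a m with hle | hle
      · refine ⟨m, Finset.mem_insert_of_mem hm, ?_⟩
        intro m' hm'
        rcases Finset.mem_insert.mp hm' with rfl | h
        · exact hle
        · exact hmax m' h
      · refine ⟨a, Finset.mem_insert_self a s, ?_⟩
        intro m' hm'
        rcases Finset.mem_insert.mp hm' with rfl | h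
        · exact r.refl m'
        · exact r.trans m' m a (hmax m' h) hle

theorem exists_isDeg (r : AdmissibleOrder n k) {f : PolyVec R n k} (hf : f ≠ 0) :
    ∃ m : MonV n k, IsDeg r f m := by
  classical
  set T : Finset (MonV n k) :=
    Finset.univ.biUnion
      (fun i : Fin k => (f i).support.image (fun α => ((α, i) : MonV n k))) with hT
  have hmem : ∀ m : MonV n k, m ∈ T ↔ (f m.2).coeff m.1 ≠ 0 := by
    intro m
    simp only [hT, Finset.mem_biUnion, Finset.mem_univ, true_and, Finset.mem_image,
      MvPolynomial.mem_support_iff]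
    constructor
    · rintro ⟨i, α, hα, rfl⟩; exact hα
    · intro h; exact ⟨m.2, m.1, h, rfl⟩
  have hne : T.Nonempty := by
    obtain ⟨i, hi⟩ := Function.ne_iff.mp hf
    obtain ⟨α, hα⟩ := MvPolynomial.ne_zero_iff.mp hi
    exact ⟨(α, i), (hmem (α, i)).mpr hα⟩
  obtain ⟨m, hm, hmax⟩ := finset_exists_max r T hne
  exact ⟨m, (hmem m).mp hm, fun m' hm' => hmax m' ((hmem m').mpr hm')⟩

theorem ltDvd_trans {r : AdmissibleOrder n k} {f g h : PolyVec R n k}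
    (h1 : LtDvd r f g) (h2 : LtDvd r g h) : LtDvd r f h := by
  obtain ⟨mf, mg, hf, hg, p1, l1, d1⟩ := h1
  obtain ⟨mg', mh, hg', hh, p2, l2, d2⟩ := h2
  obtain rfl : mg' = mg := isDeg_unique' hg' hg
  exact ⟨mf, mh, hf, hh, p1.trans p2, fun m => (l1 m).trans (l2 m), d1.trans d2⟩

theorem red_of_ltDvd {dh : R → W'} (hinj : Function.Injective dh)
    (dh0 : ∀ a : R, dh 0 ≤ dh a) {r : AdmissibleOrder n k} {A : Set (PolyVec R n k)}
    {g' g : PolyVec R n k} (hA : g' ∈ A) (hd : LtDvd r g' g) : Red dh r A g := by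
  obtain ⟨mg', mg, hg', hg, hpos, hle, q, hq⟩ := hd
  refine ⟨mg.1, mg.2, hg.1, g', hA, mg', hg', hpos, hle, q, ?_⟩
  have h0 : (g mg.2).coeff mg.1 - q * (g' mg'.2).coeff mg'.1 = 0 := by
    rw [hq]; ring
  rw [h0]
  exact lt_of_le_of_ne (dh0 _) (fun e => hg.1 (hinj e).symm)

theorem exists_same_lt [IsDomain R] {dh : R → W'} (hinj : Function.Injective dh)
    (dh0 : ∀ a : R, dh 0 ≤ dh a) {r : AdmissibleOrder n k}
    {I : Submodule (MvPolynomial (Fin n) R) (PolyVec R n k)}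
    {G H : Set (PolyVec R n k)}
    (hG : IsRedSGB dh r G I) (hH : IsRedSGB dh r H I)
    {g : PolyVec R n k} (hg : g ∈ G) :
    ∃ h ∈ H, ∃ m : MonV n k, IsDeg r g m ∧ IsDeg r h m ∧
      (g m.2).coeff m.1 = (h m.2).coeff m.1 := by
  obtain ⟨hgI, hg0⟩ := hG.1.1 g hg
  obtain ⟨h, hhH, hd1⟩ := hH.1.2 g hgI hg0
  obtain ⟨hhI, hh0⟩ := hH.1.1 h hhH
  obtain ⟨g', hg'G, hd2⟩ := hG.1.2 h hhI hh0
  have hg'g : g' = g := by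
    by_contra hne
    exact (hG.2 g hg).2
      (red_of_ltDvd hinj dh0 ⟨hg'G, by simpa using hne⟩ (ltDvd_trans hd2 hd1))
  rw [hg'g] at hd2
  obtain ⟨mg, mh, hdg, hdh, p1, l1, d1⟩ := hd2
  obtain ⟨mh', mg', hdh', hdg', p2, l2, d2⟩ := hd1
  have em : mh' = mh := isDeg_unique' hdh' hdh
  have eg : mg' = mg := isDeg_unique' hdg' hdg
  rw [em, eg] at p2 l2 d2
  have emh : mh = mg :=
    Prod.ext (Finsupp.ext fun j => le_antisymm (l2 j) (l1 j)) p1.symm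
  rw [emh] at hdh d1 d2
  obtain ⟨u, hu⟩ := associated_of_dvd_dvd d1 d2
  obtain ⟨-, mpg, hdpg, hng⟩ := (hG.2 g hg).1
  have empg : mpg = mg := isDeg_unique' hdpg hdg
  rw [empg] at hng
  obtain ⟨-, mph, hdph, hnh⟩ := (hH.2 h hhH).1
  have emph : mph = mg := isDeg_unique' hdph hdh
  rw [emph] at hnh
  have e1 : (u : R) * (g mg.2).coeff mg.1 = (h mg.2).coeff mg.1 := by
    rw [← hu]; ring
  have e2 : ((u⁻¹ : Rˣ) : R) * (h mg.2).coeff mg.1 = (g mg.2).coeff mg.1 := by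
    rw [← hu]
    calc ((u⁻¹ : Rˣ) : R) * ((g mg.2).coeff mg.1 * (u : R))
        = (g mg.2).coeff mg.1 * ((u : R) * ((u⁻¹ : Rˣ) : R)) := by ring
      _ = (g mg.2).coeff mg.1 := by rw [Units.mul_inv, mul_one]
  have le1 : dh ((g mg.2).coeff mg.1) ≤ dh ((h mg.2).coeff mg.1) := by
    have := hng (u : R) u.isUnit
    rwa [e1] at this
  have le2 : dh ((h mg.2).coeff mg.1) ≤ dh ((g mg.2).coeff mg.1) := by
    have := hnh ((u⁻¹ : Rˣ) : R) (u⁻¹).isUnit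
    rwa [e2] at this
  exact ⟨h, hhH, mg, hdg, hdh, hinj (le_antisymm le1 le2)⟩

theorem redSGB_subset [IsDomain R] {dh : R → W'} (hinj : Function.Injective dh)
    (dh0 : ∀ a : R, dh 0 ≤ dh a) {r : AdmissibleOrder n k}
    {I : Submodule (MvPolynomial (Fin n) R) (PolyVec R n k)}
    {G H : Set (PolyVec R n k)}
    (hG : IsRedSGB dh r G I) (hH : IsRedSGB dh r H I) : G ⊆ H := by
  intro g hg
  obtain ⟨h, hh, mg, hdg, hdh, hcoe⟩ := exists_same_lt hinj dh0 hG hH hg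
  suffices hgh : g = h by rwa [hgh]
  by_contra hne
  have hp0 : g - h ≠ 0 := sub_ne_zero.mpr hne
  have hpI : g - h ∈ I := I.sub_mem (hG.1.1 g hg).1 (hH.1.1 h hh).1
  obtain ⟨g1, hg1G, mg1, mp, hdg1, hdp, hpos1, hle1, hdvd1⟩ := hG.1.2 _ hpI hp0
  have hcoeffp : ∀ (α : Fin n →₀ ℕ) (i : Fin k),
      ((g - h) i).coeff α = (g i).coeff α - (h i).coeff α := by
    intro α i; simp [MvPolynomial.coeff_sub]
  -- every monomial of g - h is ≤ mg and ≠ mg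
  have hple : r.le mp mg := by
    have hne0 := hdp.1
    rw [hcoeffp] at hne0
    by_cases hgc : (g mp.2).coeff mp.1 = 0
    · have : (h mp.2).coeff mp.1 ≠ 0 := by
        intro h0; rw [hgc, h0, sub_self] at hne0; exact hne0 rfl
      exact hdh.2 mp this
    · exact hdg.2 mp hgc
  have hpne : mp ≠ mg := by
    intro e
    have := hdp.1
    rw [e, hcoeffp, hcoe, sub_self] at this
    exact this rfl
  -- Lm g does not divide mp
  have hnd : ¬(mg.2 = mp.2 ∧ ∀ j, mg.1 j ≤ mp.1 j) := by
    rintro ⟨hp2, hle⟩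
    have h1 : r.le (mg.1, mp.2) (mp.1, mp.2) := r.dvd_le _ _ _ hle
    have h2 : r.le mg mp := by
      have e1 : ((mg.1, mp.2) : MonV n k) = mg := by
        rw [← hp2]
      have e2 : ((mp.1, mp.2) : MonV n k) = mp := rfl
      rwa [e1, e2] at h1
    exact hpne (r.antisymm mp mg hple h2)
  have hg1ne : g1 ≠ g := by
    rintro rfl
    have : mg1 = mg := isDeg_unique' hdg1 hdg
    exact hnd ⟨this ▸ hpos1, this ▸ hle1⟩
  obtain ⟨h1, hh1, m1, hdg1', hdh1, hc1⟩ := exists_same_lt hinj dh0 hG hH hg1G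
  obtain rfl : m1 = mg1 := isDeg_unique' hdg1' hdg1
  have hh1ne : h1 ≠ h := by
    rintro rfl
    have : m1 = mg := isDeg_unique' hdh1 hdh
    exact hnd ⟨this ▸ hpos1, this ▸ hle1⟩
  set cg := (g mp.2).coeff mp.1 with hcg_def
  set ch := (h mp.2).coeff mp.1 with hch_def
  set a := (g1 m1.2).coeff m1.1 with ha_def
  have hbne : cg - ch ≠ 0 := by
    have := hdp.1; rwa [hcoeffp] at this
  have hdvd1' : a ∣ cg - ch := by
    have := hdvd1; rwa [hcoeffp] at this
  obtain ⟨q₀, hq₀⟩ := hdvd1'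
  have e1 : cg - q₀ * a = ch := by rw [mul_comm, ← hq₀]; ring
  have e2 : ch - (-q₀) * a = cg := by rw [neg_mul, sub_neg_eq_add, mul_comm, ← hq₀]; ring
  have hGirr : cg ≠ 0 → ∀ q : R, dh cg ≤ dh (cg - q * a) := by
    intro hc q
    by_contra hlt
    push_neg at hlt
    exact (hG.2 g hg).2
      ⟨mp.1, mp.2, hc, g1, ⟨hg1G, by simpa using hg1ne⟩, m1, hdg1, hpos1, hle1, q, hlt⟩
  have hHirr : ch ≠ 0 → ∀ q : R, dh ch ≤ dh (ch - q * a) := by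
    intro hc q
    by_contra hlt
    push_neg at hlt
    refine (hH.2 h hh).2
      ⟨mp.1, mp.2, hc, h1, ⟨hh1, by simpa using hh1ne⟩, m1, hdh1, hpos1, hle1, q, ?_⟩
    rw [← hc1, ← hch_def]; exact hlt
  by_cases hcg0 : cg = 0
  · have hch0 : ch ≠ 0 := by
      intro h0; rw [hcg0, h0, sub_self] at hbne; exact hbne rfl
    have hle' := hHirr hch0 (-q₀)
    rw [e2, hcg0] at hle'
    exact hch0 (hinj (le_antisymm hle' (dh0 ch)))
  · by_cases hch0 : ch = 0
    · have hle' := hGirr hcg0 q₀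
      rw [e1, hch0] at hle'
      exact hcg0 (hinj (le_antisymm hle' (dh0 cg)))
    · have hle1' := hGirr hcg0 q₀
      rw [e1] at hle1'
      have hle2' := hHirr hch0 (-q₀)
      rw [e2] at hle2'
      exact hbne (sub_eq_zero.mpr (hinj (le_antisymm hle1' hle2')))

end Aux

/-- **uniqueness of reduced strong Gröbner bases.** Over a Euclidean
domain `R` with grading `δ` and an injective refinement `δ̂`, two reduced strong
Gröbner bases of the same submodule of `R[x₁,…,x_n]^k` (w.r.t. the same admissible
order) coincide. -/
theorem reduced_sgb_unique
    {R : Type*} [CommRing R] [IsDomain R] {n k : ℕ}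
    {W : Type*} [LinearOrder W] [WellFoundedLT W]
    {W' : Type*} [LinearOrder W'] [WellFoundedLT W']
    (δ : R → W)
    (hzero : ∀ a : R, δ 0 ≤ δ a)
    (hmul : ∀ a b : R, a ≠ 0 → δ b ≤ δ (a * b))
    (hdiv : ∀ a b : R, a ≠ 0 → ∃ q s : R, b = q * a + s ∧ δ s < δ a)
    (dh : R → W') (hinj : Function.Injective dh)
    (dh0 : ∀ a : R, dh 0 ≤ dh a)
    (hmono : ∀ a b : R, δ a < δ b → dh a < dh b)
    (r : AdmissibleOrder n k)
    (I : Submodule (MvPolynomial (Fin n) R) (PolyVec R n k))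
    (G H : Set (PolyVec R n k))
    (hG : IsRedSGB dh r G I) (hH : IsRedSGB dh r H I) :
    G = H :=
  Set.Subset.antisymm (redSGB_subset hinj dh0 hG hH) (redSGB_subset hinj dh0 hH hG)
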